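/- If the series S = Σ_{k=0}^∞ c_k (r²/(1+r²))^k with c_k = ((2k)!!/(2k+1)!!) P(k+1, q), q = (1+r²)h²/2, is truncated after the n-th term, then the tail R_n = (|r|/(2π(1+r²))) Σ_{k=n+1}^∞ c_k (r²/(1+r²))^k satisfies 0 ≤ R_n ≤ B_n/(1 + e^{-q} r²) ≤ B_n, where B_n = ((2n+2)!!/(2n+3)!!) (|r|/(2π)) (1−e^{-q})^{n+2} (r²/(1+r²))^{n+1}. -/

import Mathlib

open Real MeasureTheory

/-- Lower regularized incomplete gamma function P(a,x) = γ(a,x)/Γ(a). -/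
noncomputable def regGammaP (a x : ℝ) : ℝ :=
  (∫ t in (0:ℝ)..x, t ^ (a - 1) * Real.exp (-t)) / Real.Gamma a

/-- (2k)!! = 2^k k! -/
noncomputable def evenDF (k : ℕ) : ℝ := 2 ^ k * k.factorial

/-- (2k+1)!! = (2k+1)!/(2^k k!) -/
noncomputable def oddDF (k : ℕ) : ℝ := (2 * k + 1).factorial / (2 ^ k * k.factorial)

/-!
Each tail term is dominated by a geometric one. The ratio `(2k)!!/(2k+1)!!` decreases in `k`,
and for integer `a` the bound `P(a, x) ≤ (1 - e^{-x})^a` follows by induction from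
`P(n+2, x) = P(n+1, x) - x^{n+1} e^{-x}/(n+1)!` (integration by parts) together with
`P(n+1, x) ≤ x^{n+1}/(n+1)!`. Hence the `k`-th tail term is at most the first bound times
`((1 - e^{-q}) r²/(1+r²))^k`, and the geometric sum contributes the factor
`1/(1 - (1 - e^{-q}) r²/(1+r²)) = (1+r²)/(1 + e^{-q} r²)`.
-/

open intervalIntegral Nat

lemma one_sub_exp_neg_nonneg {x : ℝ} (hx : 0 ≤ x) : 0 ≤ 1 - exp (-x) :=
  sub_nonneg.mpr (exp_le_one_iff.mpr (neg_nonpos.mpr hx))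

lemma integral_pow_mul_exp_neg_nonneg (n : ℕ) {x : ℝ} (hx : 0 ≤ x) :
    0 ≤ ∫ t in (0:ℝ)..x, t ^ n * exp (-t) :=
  integral_nonneg hx fun _ ht => mul_nonneg (pow_nonneg ht.1 n) (exp_nonneg _)

lemma integral_pow_mul_exp_neg_le (n : ℕ) {x : ℝ} (hx : 0 ≤ x) :
    ∫ t in (0:ℝ)..x, t ^ n * exp (-t) ≤ x ^ (n + 1) / (n + 1) :=
  calc ∫ t in (0:ℝ)..x, t ^ n * exp (-t)
      ≤ ∫ t in (0:ℝ)..x, t ^ n :=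
        integral_mono_on hx ((by fun_prop : Continuous _).intervalIntegrable _ _)
          (intervalIntegrable_pow n) fun t ht =>
            mul_le_of_le_one_right (pow_nonneg ht.1 n) (exp_le_one_iff.mpr (by linarith [ht.1]))
    _ = x ^ (n + 1) / (n + 1) := by simp [integral_pow]

lemma integral_pow_succ_mul_exp_neg (n : ℕ) (x : ℝ) :
    ∫ t in (0:ℝ)..x, t ^ (n + 1) * exp (-t)
      = (n + 1) * (∫ t in (0:ℝ)..x, t ^ n * exp (-t)) - x ^ (n + 1) * exp (-x) := by
  have hu : ∀ t ∈ Set.uIcc 0 x, HasDerivAt (fun t : ℝ => t ^ (n + 1)) ((n + 1 : ℝ) * t ^ n) t :=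
    fun t _ => by simpa using hasDerivAt_pow (n + 1) t
  have hv : ∀ t ∈ Set.uIcc 0 x, HasDerivAt (fun t : ℝ => -exp (-t)) (exp (-t)) t :=
    fun t _ => by simpa using (hasDerivAt_neg t).exp.fun_neg
  rw [integral_mul_deriv_eq_deriv_mul hu hv ((by fun_prop : Continuous _).intervalIntegrable _ _)
    ((by fun_prop : Continuous _).intervalIntegrable _ _)]
  simp only [mul_neg, intervalIntegral.integral_neg, mul_assoc,
    intervalIntegral.integral_const_mul]
  simp only [ne_eq, Nat.add_eq_zero_iff, one_ne_zero, and_false, not_false_eq_true, zero_pow,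
    neg_zero, exp_zero, mul_one, sub_zero, sub_neg_eq_add]
  ring

lemma regGammaP_natCast_add_one (n : ℕ) (x : ℝ) :
    regGammaP (n + 1) x = (∫ t in (0:ℝ)..x, t ^ n * exp (-t)) / n ! := by
  simp [regGammaP, Gamma_nat_eq_factorial, ← rpow_natCast]

lemma regGammaP_natCast_add_one_nonneg (n : ℕ) {x : ℝ} (hx : 0 ≤ x) :
    0 ≤ regGammaP (n + 1) x := by
  rw [regGammaP_natCast_add_one]
  exact div_nonneg (integral_pow_mul_exp_neg_nonneg n hx) (cast_nonneg _)

lemma regGammaP_natCast_add_one_le_pow_div_factorial (n : ℕ) {x : ℝ} (hx : 0 ≤ x) :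
    regGammaP (n + 1) x ≤ x ^ (n + 1) / (n + 1)! := by
  calc regGammaP (n + 1) x = (∫ t in (0:ℝ)..x, t ^ n * exp (-t)) / n ! :=
        regGammaP_natCast_add_one n x
    _ ≤ x ^ (n + 1) / (n + 1) / n ! := by gcongr; exact integral_pow_mul_exp_neg_le n hx
    _ = x ^ (n + 1) / (n + 1)! := by rw [factorial_succ]; push_cast; field_simp

lemma regGammaP_natCast_add_two (n : ℕ) (x : ℝ) :
    regGammaP ((n + 1 : ℕ) + 1) x = regGammaP (n + 1) x - x ^ (n + 1) * exp (-x) / (n + 1)! := by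
  rw [regGammaP_natCast_add_one, regGammaP_natCast_add_one, integral_pow_succ_mul_exp_neg,
    factorial_succ]
  push_cast
  field_simp

lemma regGammaP_natCast_add_one_le_pow (n : ℕ) {x : ℝ} (hx : 0 ≤ x) :
    regGammaP (n + 1) x ≤ (1 - exp (-x)) ^ (n + 1) := by
  induction n with
  | zero =>
    rw [regGammaP_natCast_add_one]
    simp [integral_comp_neg fun t => exp t]
  | succ n ih =>
    have hP := regGammaP_natCast_add_one_le_pow_div_factorial n hx
    have step : regGammaP ((n + 1 : ℕ) + 1) x ≤ (1 - exp (-x)) * regGammaP (n + 1) x := by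
      rw [regGammaP_natCast_add_two]
      have : exp (-x) * regGammaP (n + 1) x ≤ x ^ (n + 1) * exp (-x) / (n + 1)! := by
        rw [mul_comm _ (exp _), mul_div_assoc]
        exact mul_le_mul_of_nonneg_left hP (exp_pos _).le
      linarith
    calc _ ≤ (1 - exp (-x)) * regGammaP (n + 1) x := step
      _ ≤ (1 - exp (-x)) * (1 - exp (-x)) ^ (n + 1) := by gcongr; exact one_sub_exp_neg_nonneg hx
      _ = (1 - exp (-x)) ^ (n + 1 + 1) := by ring

lemma evenDF_div_oddDF_pos (k : ℕ) : 0 < evenDF k / oddDF k := by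
  unfold evenDF oddDF
  positivity

lemma evenDF_div_oddDF_succ (k : ℕ) :
    evenDF (k + 1) / oddDF (k + 1) = evenDF k / oddDF k * ((2 * k + 2) / (2 * k + 3)) := by
  unfold evenDF oddDF
  rw [show 2 * (k + 1) + 1 = 2 * k + 1 + 1 + 1 by ring]
  simp only [factorial_succ]
  push_cast
  field_simp
  ring

lemma antitone_evenDF_div_oddDF : Antitone fun k => evenDF k / oddDF k :=
  antitone_nat_of_succ_le fun k => by
    rw [evenDF_div_oddDF_succ]
    exact mul_le_of_le_one_right (evenDF_div_oddDF_pos k).le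
      ((div_le_one (by positivity)).mpr (by linarith))

lemma tsum_le_div_one_sub_of_le_geometric {f : ℕ → ℝ} {D ρ : ℝ} (hf : ∀ k, 0 ≤ f k)
    (hfρ : ∀ k, f k ≤ D * ρ ^ k) (hρ₀ : 0 ≤ ρ) (hρ₁ : ρ < 1) :
    ∑' k, f k ≤ D / (1 - ρ) := by
  have hg : Summable fun k => D * ρ ^ k := (summable_geometric_of_lt_one hρ₀ hρ₁).mul_left D
  calc ∑' k, f k ≤ ∑' k, D * ρ ^ k := (hg.of_nonneg_of_le hf hfρ).tsum_le_tsum hfρ hg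
    _ = D / (1 - ρ) := by rw [tsum_mul_left, tsum_geometric_of_lt_one hρ₀ hρ₁, div_eq_mul_inv]

section Tail

variable {q x : ℝ} (m : ℕ)

lemma tail_term_nonneg (hq : 0 ≤ q) (hx : 0 ≤ x) (k : ℕ) :
    0 ≤ evenDF (k + m) / oddDF (k + m) * regGammaP (k + m + 1) q * x ^ (k + m) := by
  have hP : 0 ≤ regGammaP (k + m + 1) q := by
    exact_mod_cast regGammaP_natCast_add_one_nonneg (k + m) hq
  have := evenDF_div_oddDF_pos (k + m)
  positivity

lemma tail_term_le_geometric (hq : 0 ≤ q) (hx : 0 ≤ x) (k : ℕ) :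
    evenDF (k + m) / oddDF (k + m) * regGammaP (k + m + 1) q * x ^ (k + m)
      ≤ evenDF m / oddDF m * (1 - exp (-q)) ^ (m + 1) * x ^ m * ((1 - exp (-q)) * x) ^ k := by
  have hP : regGammaP (k + m + 1) q ≤ (1 - exp (-q)) ^ (k + m + 1) := by
    exact_mod_cast regGammaP_natCast_add_one_le_pow (k + m) hq
  calc _ ≤ evenDF m / oddDF m * (1 - exp (-q)) ^ (k + m + 1) * x ^ (k + m) := by
        gcongr ?_ * ?_ * _
        · exact_mod_cast regGammaP_natCast_add_one_nonneg (k + m) hq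
        · exact (evenDF_div_oddDF_pos m).le
        · exact antitone_evenDF_div_oddDF (Nat.le_add_left m k)
    _ = _ := by rw [mul_pow]; ring

lemma tail_tsum_le (hq : 0 ≤ q) (hx₀ : 0 ≤ x) (hx₁ : x < 1) :
    ∑' k : ℕ, evenDF (k + m) / oddDF (k + m) * regGammaP (k + m + 1) q * x ^ (k + m)
      ≤ evenDF m / oddDF m * (1 - exp (-q)) ^ (m + 1) * x ^ m / (1 - (1 - exp (-q)) * x) := by
  refine tsum_le_div_one_sub_of_le_geometric (tail_term_nonneg m hq hx₀)
    (tail_term_le_geometric m hq hx₀) (mul_nonneg (one_sub_exp_neg_nonneg hq) hx₀) ?_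
  nlinarith [exp_pos (-q)]

end Tail

/-- The paper's truncation index `n ≥ -1` is encoded as `m = n + 1 : ℕ`, so the tail starts at
index `m`. -/
theorem tail_bound_P (h r : ℝ) (m : ℕ) :
    0 ≤ (|r| / (2 * Real.pi * (1 + r ^ 2))) *
        ∑' k : ℕ, (evenDF (k + m) / oddDF (k + m)) *
          regGammaP (k + m + 1) ((1 + r ^ 2) * h ^ 2 / 2) *
            (r ^ 2 / (1 + r ^ 2)) ^ (k + m) ∧
    (|r| / (2 * Real.pi * (1 + r ^ 2))) *
        ∑' k : ℕ, (evenDF (k + m) / oddDF (k + m)) *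
          regGammaP (k + m + 1) ((1 + r ^ 2) * h ^ 2 / 2) *
            (r ^ 2 / (1 + r ^ 2)) ^ (k + m) ≤
      ((evenDF m / oddDF m) * (|r| / (2 * Real.pi)) *
          (1 - Real.exp (-((1 + r ^ 2) * h ^ 2 / 2))) ^ (m + 1) *
            (r ^ 2 / (1 + r ^ 2)) ^ m) /
        (1 + Real.exp (-((1 + r ^ 2) * h ^ 2 / 2)) * r ^ 2) ∧
    ((evenDF m / oddDF m) * (|r| / (2 * Real.pi)) *
          (1 - Real.exp (-((1 + r ^ 2) * h ^ 2 / 2))) ^ (m + 1) *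
            (r ^ 2 / (1 + r ^ 2)) ^ m) /
        (1 + Real.exp (-((1 + r ^ 2) * h ^ 2 / 2)) * r ^ 2) ≤
      (evenDF m / oddDF m) * (|r| / (2 * Real.pi)) *
          (1 - Real.exp (-((1 + r ^ 2) * h ^ 2 / 2))) ^ (m + 1) *
            (r ^ 2 / (1 + r ^ 2)) ^ m := by
  set q := (1 + r ^ 2) * h ^ 2 / 2
  set x := r ^ 2 / (1 + r ^ 2)
  have hq : 0 ≤ q := by positivity
  have hx₀ : 0 ≤ x := by positivity
  have hx₁ : x < 1 := (div_lt_one (by positivity)).mpr (by linarith)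
  have hc : 0 ≤ |r| / (2 * π * (1 + r ^ 2)) := by positivity
  have hB : 0 ≤ evenDF m / oddDF m * (|r| / (2 * π)) * (1 - exp (-q)) ^ (m + 1) * x ^ m :=
    mul_nonneg (mul_nonneg (mul_nonneg (evenDF_div_oddDF_pos m).le (by positivity))
      (pow_nonneg (one_sub_exp_neg_nonneg hq) _)) (pow_nonneg hx₀ _)
  refine ⟨mul_nonneg hc (tsum_nonneg (tail_term_nonneg m hq hx₀)), ?_,
    div_le_self hB (le_add_of_nonneg_right (by positivity))⟩
  have hden : 1 - (1 - exp (-q)) * x = (1 + exp (-q) * r ^ 2) / (1 + r ^ 2) := by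
    simp only [x]
    field_simp
    ring
  calc _ ≤ |r| / (2 * π * (1 + r ^ 2)) *
        (evenDF m / oddDF m * (1 - exp (-q)) ^ (m + 1) * x ^ m / (1 - (1 - exp (-q)) * x)) :=
        mul_le_mul_of_nonneg_left (tail_tsum_le m hq hx₀ hx₁) hc
    _ = _ := by
      rw [hden]
      field_simp
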